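/- arXiv:1902.05756 — 6 statements merged into one kernel-verified Lean document; each statement's English description precedes it below -/
import Mathlib

section
/- Let R be a commutative ring, S, N, D natural numbers, and a, b : Fin S → R. Define the 2S×2S matrix M over R (rows and columns indexed by Fin S ⊕ Fin S) by: M(inl i, inl i) = −g_N(aᵢ), M(inl i, inr i) = −aᵢᴺ·g_D(bᵢ), M(inr i, inl i) = 1 − bᵢ, M(inr i, inr i) = aᵢ − 1, and all other entries 0. Then det M = ∏_{i} (1 − aᵢᴺ·bᵢᴰ). (This is the Type I minor of the Alexander matrix of the tst link [Φ^μ(n(τ), d(τ), M)] with M odd, obtained by deleting the column of the generator a₀.) -/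
/-- The geometric sum `g_m(x) = ∑_{k=0}^{m-1} xᵏ`, the group-ring analogue of `(1-xᵐ)/(1-x)`. -/
def geomSum {R : Type*} [CommRing R] (m : ℕ) (x : R) : R := ∑ k ∈ Finset.range m, x ^ k

lemma geomSum_mul_one_sub {R : Type*} [CommRing R] (m : ℕ) (x : R) :
    geomSum m x * (1 - x) = 1 - x ^ m := by
  simpa [geomSum, mul_comm, mul_sub] using (mul_neg_geom_sum x m)

/-- Interleaving equivalence `Fin S ⊕ Fin S ≃ Fin 2 × Fin S`. -/
def sumFinEquiv (S : ℕ) : (Fin S ⊕ Fin S) ≃ (Fin 2 × Fin S) where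
  toFun := Sum.elim (fun i => (0, i)) (fun i => (1, i))
  invFun p := if p.1 = 0 then Sum.inl p.2 else Sum.inr p.2
  left_inv := by rintro (i | i) <;> simp
  right_inv := by rintro ⟨x, i⟩; fin_cases x <;> simp

@[simp] lemma sumFinEquiv_inl (S : ℕ) (i : Fin S) : sumFinEquiv S (Sum.inl i) = (0, i) := rfl
@[simp] lemma sumFinEquiv_inr (S : ℕ) (i : Fin S) : sumFinEquiv S (Sum.inr i) = (1, i) := rfl

open Matrix in
theorem typeI_minor_odd {R : Type*} [CommRing R] (S N D : ℕ) (a b : Fin S → R) :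
    (Matrix.fromBlocks
      (Matrix.diagonal fun i => -(geomSum N (a i)))
      (Matrix.diagonal fun i => -((a i) ^ N * geomSum D (b i)))
      (Matrix.diagonal fun i => 1 - b i)
      (Matrix.diagonal fun i => a i - 1)).det
      = ∏ i : Fin S, (1 - (a i) ^ N * (b i) ^ D) := by
  classical
  set M : Fin S → Matrix (Fin 2) (Fin 2) R := fun i =>
    !![-(geomSum N (a i)), -((a i) ^ N * geomSum D (b i)); 1 - b i, a i - 1] with hM
  have key : (Matrix.fromBlocks
      (Matrix.diagonal fun i => -(geomSum N (a i)))
      (Matrix.diagonal fun i => -((a i) ^ N * geomSum D (b i)))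
      (Matrix.diagonal fun i => 1 - b i)
      (Matrix.diagonal fun i => a i - 1))
      = (Matrix.blockDiagonal fun i => M i).submatrix
          (sumFinEquiv S) (sumFinEquiv S) := by
    ext x y
    rcases x with i | i <;> rcases y with j | j <;>
      simp only [Matrix.submatrix_apply, sumFinEquiv_inl, sumFinEquiv_inr,
        Matrix.blockDiagonal_apply, Matrix.fromBlocks_apply₁₁, Matrix.fromBlocks_apply₁₂,
        Matrix.fromBlocks_apply₂₁, Matrix.fromBlocks_apply₂₂, Matrix.diagonal] <;>
      by_cases h : i = j <;> simp [h, hM]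
  rw [key, Matrix.det_submatrix_equiv_self, Matrix.det_blockDiagonal]
  refine Finset.prod_congr rfl fun i _ => ?_
  rw [hM, Matrix.det_fin_two_of]
  linear_combination geomSum_mul_one_sub N (a i) + (a i) ^ N * geomSum_mul_one_sub D (b i)
end

section
/- Let R be a commutative ring, S, N, D natural numbers, a, b : Fin S → R, a₀ ∈ R, and j ∈ Fin S. Define the 2S×2S matrix M' over R (rows and columns indexed by Fin S ⊕ Fin S) as follows. The column inl j is given by M'(inl i, inl j) = g_N(a₀) and M'(inr i, inl j) = 0 for all i ∈ Fin S. In the remaining columns the entries are M'(inl i, inl i) = −g_N(aᵢ) (for i ≠ j), M'(inl i, inr i) = −aᵢᴺ·g_D(bᵢ), M'(inr i, inl i) = 1 − bᵢ (for i ≠ j), M'(inr i, inr i) = aᵢ − 1, and all other entries are 0. Then det M' = −g_N(a₀)·(1 − a_j)·∏_{i ≠ j} (1 − aᵢᴺ·bᵢᴰ). -/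
open Matrix in
theorem typeII_minor_odd {R : Type*} [CommRing R] (S N D : ℕ)
    (a b : Fin S → R) (a₀ : R) (j : Fin S)
    (M' : Matrix (Fin S ⊕ Fin S) (Fin S ⊕ Fin S) R)
    (h₁ : ∀ i c : Fin S, M' (Sum.inl i) (Sum.inl c) =
      if c = j then geomSum N a₀ else if c = i then -(geomSum N (a i)) else 0)
    (h₂ : ∀ i c : Fin S, M' (Sum.inl i) (Sum.inr c) =
      if c = i then -((a i) ^ N * geomSum D (b i)) else 0)
    (h₃ : ∀ i c : Fin S, M' (Sum.inr i) (Sum.inl c) =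
      if c = j then 0 else if c = i then 1 - b i else 0)
    (h₄ : ∀ i c : Fin S, M' (Sum.inr i) (Sum.inr c) =
      if c = i then a i - 1 else 0) :
    M'.det = -(geomSum N a₀ * (1 - a j) *
      ∏ i ∈ Finset.univ.erase j, (1 - (a i) ^ N * (b i) ^ D)) := by
  classical
  -- the key function: block j goes last
  set key : Fin S → ℕ := fun i => if i = j then S else (i : ℕ) with hkeydef
  have keyle : ∀ i, key i ≤ S := by
    intro i
    by_cases h : i = j <;> simp [key, h, le_of_lt i.isLt]
  have keyinj : Function.Injective key := by
    intro x y hxy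
    by_cases hx : x = j <;> by_cases hy : y = j <;>
      simp [key, hx, hy] at hxy ⊢
    · exact absurd hxy.symm (ne_of_lt y.isLt)
    · exact absurd hxy (ne_of_lt x.isLt)
    · exact Fin.val_injective hxy
  set bfun : Fin S ⊕ Fin S → ℕ := Sum.elim key key with hbfun
  have hkeyj : key j = S := by simp [key]
  have hbt : M'.BlockTriangular bfun := by
    rintro (x | x) (y | y) hlt
    · rw [h₁]
      have hyj : y ≠ j := by
        rintro rfl
        exact absurd (lt_of_lt_of_le hlt (keyle x)) (by simp [bfun, hkeyj])
      have hyx : y ≠ x := by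
        rintro rfl
        exact lt_irrefl _ hlt
      simp [hyj, hyx]
    · rw [h₂]
      have hyx : y ≠ x := by
        rintro rfl
        exact lt_irrefl _ hlt
      simp [hyx]
    · rw [h₃]
      have hyx : y ≠ x := by
        rintro rfl
        exact lt_irrefl _ hlt
      by_cases hyj : y = j <;> simp [hyj, hyx]
    · rw [h₄]
      have hyx : y ≠ x := by
        rintro rfl
        exact lt_irrefl _ hlt
      simp [hyx]
  rw [hbt.det]
  have himg : Finset.univ.image bfun = Finset.univ.image key := by
    ext n
    simp only [Finset.mem_image, Finset.mem_univ, true_and]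
    constructor
    · rintro ⟨(x | x), rfl⟩ <;> exact ⟨x, rfl⟩
    · rintro ⟨x, rfl⟩; exact ⟨Sum.inl x, rfl⟩
  rw [himg, Finset.prod_image (fun x _ y _ h => keyinj h)]
  have hblock : ∀ i : Fin S, (M'.toSquareBlock bfun (key i)).det =
      if i = j then geomSum N a₀ * (a j - 1) else 1 - (a i) ^ N * (b i) ^ D := by
    intro i
    have hmem1 : bfun (Sum.inl i) = key i := rfl
    have hmem2 : bfun (Sum.inr i) = key i := rfl
    let e : Fin 2 ≃ {x : Fin S ⊕ Fin S // bfun x = key i} :=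
      { toFun := fun t => if t = 0 then ⟨Sum.inl i, hmem1⟩ else ⟨Sum.inr i, hmem2⟩
        invFun := fun x => if x.1 = Sum.inl i then 0 else 1
        left_inv := by
          intro t
          fin_cases t <;> simp
        right_inv := by
          rintro ⟨(y | y), hy⟩ <;>
            (have : y = i := keyinj hy; subst this; simp) }
    rw [← Matrix.det_submatrix_equiv_self e, Matrix.det_fin_two]
    have e00 : ((M'.toSquareBlock bfun (key i)).submatrix e e) 0 0 = M' (Sum.inl i) (Sum.inl i) := rfl
    have e01 : ((M'.toSquareBlock bfun (key i)).submatrix e e) 0 1 = M' (Sum.inl i) (Sum.inr i) := rfl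
    have e10 : ((M'.toSquareBlock bfun (key i)).submatrix e e) 1 0 = M' (Sum.inr i) (Sum.inl i) := rfl
    have e11 : ((M'.toSquareBlock bfun (key i)).submatrix e e) 1 1 = M' (Sum.inr i) (Sum.inr i) := rfl
    rw [e00, e01, e10, e11, h₁, h₂, h₃, h₄]
    have gA := geom_sum_mul (a i) N
    have gB := geom_sum_mul (b i) D
    simp only [geomSum] at *
    by_cases hij : i = j
    · subst hij
      simp only [ite_true, eq_self_iff_true, if_true, if_pos rfl]
      ring
    · simp only [if_neg hij, ite_true, eq_self_iff_true, if_true, if_pos rfl]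
      linear_combination (-1 : R) * gA - a i ^ N * gB
  rw [Finset.prod_congr rfl (fun i _ => hblock i),
    ← Finset.mul_prod_erase _ _ (Finset.mem_univ j), if_pos rfl,
    Finset.prod_congr rfl (fun i hi => if_neg (Finset.ne_of_mem_erase hi))]
  ring
end

section
/- Let R be a commutative ring, S, N, D natural numbers, a, b : Fin S → R, a₀ ∈ R, and j ∈ Fin S. Define the 2S×2S matrix M'' over R (rows and columns indexed by Fin S ⊕ Fin S) by: column inr j is given by M''(inl i, inr j) = g_N(a₀) for all i ∈ Fin S and M''(inr i, inr j) = 0 for all i ∈ Fin S; and for the remaining columns: M''(inl i, inl i) = −g_N(aᵢ), M''(inl i, inr i) = −aᵢᴺ·g_D(bᵢ) (when i ≠ j), M''(inr i, inl i) = 1 − bᵢ, M''(inr i, inr i) = aᵢ − 1 (when i ≠ j), all other entries 0. Then det M'' = −g_N(a₀)·(1 − b_j)·∏_{i ≠ j} (1 − aᵢᴺ·bᵢᴰ). (This is the Type III.j minor of the Alexander matrix of the tst link [Φ^μ(n(τ), d(τ), M)] with M odd, in which the column of b_j is replaced by the column of a₀.) -/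
open Matrix Finset

namespace Matrix

variable {R ι : Type*} [CommRing R]

theorem det_eq_of_forall_eq_or_eq {m : Type*} [Fintype m] [DecidableEq m] (A : Matrix m m R)
    {u v : m} (hne : u ≠ v) (hcover : ∀ x, x = u ∨ x = v) :
    A.det = A u u * A v v - A u v * A v u := by
  let e : Fin 2 ≃ m := Equiv.ofBijective ![u, v] ⟨by
    intro x y hxy
    fin_cases x <;> fin_cases y <;> simp_all [eq_comm], fun x => by
    rcases hcover x with rfl | rfl
    exacts [⟨0, rfl⟩, ⟨1, rfl⟩]⟩
  rw [← det_submatrix_equiv_self e, det_fin_two]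
  rfl

def pairBlock (M : Matrix (ι ⊕ ι) (ι ⊕ ι) R) (i : ι) : Matrix (Fin 2) (Fin 2) R :=
  !![M (.inl i) (.inl i), M (.inl i) (.inr i); M (.inr i) (.inl i), M (.inr i) (.inr i)]

variable [Fintype ι]

theorem det_toSquareBlock_eq_det_pairBlock [DecidableEq ι] {α : Type*} [DecidableEq α]
    (M : Matrix (ι ⊕ ι) (ι ⊕ ι) R) (b : ι ⊕ ι → α) (k : α) (i : ι)
    (hk : ∀ r, b r = k ↔ Sum.elim id id r = i) :
    (M.toSquareBlock b k).det = (pairBlock M i).det := by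
  rw [det_eq_of_forall_eq_or_eq _ (u := ⟨.inl i, (hk _).2 rfl⟩) (v := ⟨.inr i, (hk _).2 rfl⟩)
    (by simp) ?_, pairBlock, det_fin_two_of]
  · rfl
  rintro ⟨r | r, hr⟩ <;> have := (hk _).1 hr <;> simp_all

theorem det_eq_det_pairBlock_mul_prod [DecidableEq ι] (M : Matrix (ι ⊕ ι) (ι ⊕ ι) R) (j : ι)
    (hM : ∀ r c, Sum.elim id id r ≠ Sum.elim id id c → Sum.elim id id c ≠ j → M r c = 0) :
    M.det = (pairBlock M j).det * ∏ i ∈ univ.erase j, (pairBlock M i).det := by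
  -- Any linear order on `ι` works: sending the pair of `j` to `⊤` puts it last.
  let _ : LinearOrder ι := LinearOrder.lift' (Fintype.equivFin ι) (Fintype.equivFin ι).injective
  let p : ι ⊕ ι → ι := Sum.elim id id
  let b : ι ⊕ ι → WithTop ι := fun r => if p r = j then ⊤ else p r
  have hb : M.BlockTriangular b := by
    intro r c hrc
    apply hM
    · intro h
      simp only [b, p, h] at hrc
      exact lt_irrefl _ hrc
    · intro h
      simp only [b, p, h] at hrc
      exact not_top_lt hrc
  have hblock : ∀ i : ι, (M.toSquareBlock b i).det = if i = j then 1 else (pairBlock M i).det := by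
    intro i
    split_ifs with hij
    · have : IsEmpty {r // b r = i} := ⟨fun ⟨r, hr⟩ => by
        by_cases h : p r = j <;> simp_all [b]⟩
      exact det_isEmpty
    · exact det_toSquareBlock_eq_det_pairBlock M b _ i fun r => by
        by_cases h : p r = j <;> simp_all [b, p, eq_comm]
  calc M.det = ∏ k : WithTop ι, (M.toSquareBlock b k).det := hb.det_fintype
    _ = (M.toSquareBlock b ⊤).det * ∏ i : ι, (M.toSquareBlock b i).det := Fintype.prod_option _
    _ = (pairBlock M j).det * ∏ i ∈ univ.erase j, (pairBlock M i).det := by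
      rw [← prod_erase univ (a := j) (f := fun i : ι => (M.toSquareBlock b i).det)
        (by simp [hblock]), det_toSquareBlock_eq_det_pairBlock M b _ j]
      · exact congrArg _ (prod_congr rfl fun i hi => by simp [hblock, ne_of_mem_erase hi])
      · intro r
        by_cases h : p r = j <;> simp_all [b, p]

end Matrix

theorem one_sub_pow_mul_pow_eq_geomSum {R : Type*} [CommRing R] (x y : R) (m n : ℕ) :
    1 - x ^ m * y ^ n = geomSum m x * (1 - x) + x ^ m * (geomSum n y * (1 - y)) := by
  simp only [geomSum, geom_sum_mul_neg]
  ring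

open Matrix in
theorem typeIII_minor_odd {R : Type*} [CommRing R] (S N D : ℕ)
    (a b : Fin S → R) (a₀ : R) (j : Fin S)
    (M'' : Matrix (Fin S ⊕ Fin S) (Fin S ⊕ Fin S) R)
    (h₁ : ∀ i c : Fin S, M'' (Sum.inl i) (Sum.inl c) =
      if c = i then -(geomSum N (a i)) else 0)
    (h₂ : ∀ i c : Fin S, M'' (Sum.inl i) (Sum.inr c) =
      if c = j then geomSum N a₀ else if c = i then -((a i) ^ N * geomSum D (b i)) else 0)
    (h₃ : ∀ i c : Fin S, M'' (Sum.inr i) (Sum.inl c) =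
      if c = i then 1 - b i else 0)
    (h₄ : ∀ i c : Fin S, M'' (Sum.inr i) (Sum.inr c) =
      if c = j then 0 else if c = i then a i - 1 else 0) :
    M''.det = -(geomSum N a₀ * (1 - b j) *
      ∏ i ∈ Finset.univ.erase j, (1 - (a i) ^ N * (b i) ^ D)) := by
  have h_offdiag : ∀ r c, Sum.elim id id r ≠ Sum.elim id id c → Sum.elim id id c ≠ j →
      M'' r c = 0 := by
    rintro (r | r) (c | c) hrc hcj <;>
      simp only [Sum.elim_inl, Sum.elim_inr, id] at hrc hcj <;>
      simp [h₁, h₂, h₃, h₄, hcj, hrc.symm]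
  have h_pair_j : (pairBlock M'' j).det = -(geomSum N a₀ * (1 - b j)) := by
    simp [pairBlock, det_fin_two_of, h₁, h₂, h₃, h₄]
  have h_pair : ∀ i ∈ univ.erase j, (pairBlock M'' i).det = 1 - a i ^ N * b i ^ D := by
    intro i hi
    simp only [pairBlock, det_fin_two_of, h₁, h₂, h₃, h₄, ne_of_mem_erase hi, ↓reduceIte]
    rw [one_sub_pow_mul_pow_eq_geomSum]
    ring
  rw [det_eq_det_pairBlock_mul_prod M'' j h_offdiag, h_pair_j, prod_congr rfl h_pair]
  ring
end

section
/- Let R be a commutative ring, S ≥ 1, N, D natural numbers, a : Fin (S−1) → R and b : Fin S → R. Define the (2S−1)×(2S−1) matrix M over R with rows indexed by (Fin S) ⊕ (Fin (S−1)) (relator rows r₁,…,r_S, then commutator rows s₁,…,s_{S−1}) and columns indexed by (Fin (S−1)) ⊕ (Fin S) (columns of a₁,…,a_{S−1}, then of b₁,…,b_S), with entries: for i ∈ Fin (S−1), row rᵢ has −g_N(aᵢ) in column aᵢ and −aᵢᴺ·g_D(bᵢ) in column bᵢ; row r_S has −g_D(b_S) in column b_S; for j ∈ Fin (S−1), row s_j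 has 1 − b_j in column a_j and a_j − 1 in column b_j; all other entries are 0. Then det M = (−1)^S · g_D(b_S) · ∏_{i=1}^{S−1} (1 − aᵢᴺ·bᵢᴰ). (This is the Type I minor of the Alexander matrix of the tst link [Φ^μ(n(τ), d(τ), M)] with M even, obtained by deleting the column of a₀.) -/
open Matrix

def myEquiv (T : ℕ) : (Fin 2 × Fin T) ⊕ Fin 1 ≃ Fin (T + 1) ⊕ Fin T :=
  (Equiv.sumCongr ((finTwoEquiv.prodCongr (Equiv.refl (Fin T))).trans
      (Equiv.boolProdEquivSum (Fin T))) (Equiv.refl (Fin 1))).trans <|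
    ((Equiv.sumAssoc (Fin T) (Fin T) (Fin 1)).trans <|
      ((Equiv.refl (Fin T)).sumCongr (Equiv.sumComm (Fin T) (Fin 1))).trans
        (Equiv.sumAssoc (Fin T) (Fin 1) (Fin T)).symm).trans <|
      Equiv.sumCongr finSumFinEquiv (Equiv.refl (Fin T))

lemma myEquiv_apply_zero (T : ℕ) (k : Fin T) :
    myEquiv T (Sum.inl (0, k)) = Sum.inl (Fin.castSucc k) := rfl

lemma myEquiv_apply_one (T : ℕ) (k : Fin T) :
    myEquiv T (Sum.inl (1, k)) = Sum.inr k := rfl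

lemma myEquiv_apply_last (T : ℕ) (u : Fin 1) :
    myEquiv T (Sum.inr u) = Sum.inl (Fin.last T) := by
  rw [Fin.eq_zero u]; rfl

lemma aux_det {R : Type*} [CommRing R] (T : ℕ) (p q r s : Fin T → R) (w : R)
    (M : Matrix (Fin (T + 1) ⊕ Fin T) (Fin (T + 1) ⊕ Fin T) R)
    (h1 : ∀ i c, M (Sum.inl i) (Sum.inl c) =
      if c = i then (if h : (i : ℕ) < T then p ⟨i, h⟩ else w) else 0)
    (h2 : ∀ (i : Fin (T + 1)) (c : Fin T), M (Sum.inl i) (Sum.inr c) =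
      if (c : ℕ) = (i : ℕ) then q c else 0)
    (h3 : ∀ (j : Fin T) (c : Fin (T + 1)), M (Sum.inr j) (Sum.inl c) =
      if (c : ℕ) = (j : ℕ) then r j else 0)
    (h4 : ∀ j c, M (Sum.inr j) (Sum.inr c) = if c = j then s j else 0) :
    M.det = w * ∏ k, (p k * s k - q k * r k) := by
  have key : M.submatrix (myEquiv T) (myEquiv T) =
      fromBlocks (blockDiagonal fun k => !![p k, q k; r k, s k]) 0 0
        (Matrix.of fun _ _ : Fin 1 => w) := by
    ext x y
    rcases x with ⟨bx, kx⟩ | ux <;> rcases y with ⟨by', ky⟩ | uy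
    · fin_cases bx <;> fin_cases by' <;>
        simp only [Fin.zero_eta, Fin.mk_one, submatrix_apply,
          myEquiv_apply_zero, myEquiv_apply_one,
          fromBlocks_apply₁₁, blockDiagonal_apply, h1, h2, h3, h4, of_apply,
          Matrix.cons_val', Matrix.cons_val_zero, Matrix.cons_val_one,
          Matrix.head_cons, Matrix.head_fin_const, Matrix.empty_val',
          Matrix.cons_val_fin_one] <;>
      · rcases eq_or_ne kx ky with h | h
        · subst h
          simp [Fin.ext_iff, kx.isLt, Fin.eta]
        · have h' : (kx : ℕ) ≠ (ky : ℕ) := fun hh => h (Fin.ext hh)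
          simp [Fin.ext_iff, h, Ne.symm h, h', Ne.symm h']
    · fin_cases bx <;>
        simp only [Fin.zero_eta, Fin.mk_one, submatrix_apply,
          myEquiv_apply_zero, myEquiv_apply_one,
          myEquiv_apply_last, fromBlocks_apply₁₂, h1, h2, h3, h4,
          Matrix.zero_apply] <;>
      · rw [if_neg]
        simp only [Fin.ext_iff, Fin.coe_castSucc, Fin.val_last]
        omega
    · fin_cases by' <;>
        simp only [Fin.zero_eta, Fin.mk_one, submatrix_apply,
          myEquiv_apply_zero, myEquiv_apply_one,
          myEquiv_apply_last, fromBlocks_apply₂₁, h1, h2, h3, h4,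
          Matrix.zero_apply] <;>
      · rw [if_neg]
        simp only [Fin.ext_iff, Fin.coe_castSucc, Fin.val_last]
        omega
    · simp [submatrix_apply, myEquiv_apply_last, h1, Fin.last]
  rw [← Matrix.det_submatrix_equiv_self (myEquiv T), key,
    Matrix.det_fromBlocks_zero₂₁, Matrix.det_blockDiagonal]
  simp [Matrix.det_fin_one, Matrix.det_fin_two_of, mul_comm]

open Matrix in
/-- Type I minor of the Alexander matrix of a tst link with `M` even.
Rows: `Sum.inl i` = relator row `r_{i+1}` (`i : Fin S`), `Sum.inr s` = commutator row
`s_{s+1}` (`s : Fin (S-1)`).  Columns: `Sum.inl c` = column of `b_{c+1}` (`c : Fin S`),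
`Sum.inr c` = column of `a_{c+1}` (`c : Fin (S-1)`); this differs from listing the
`a`-columns first only by a column permutation of even sign `(-1)^{S(S-1)} = 1`. -/
theorem typeI_minor_even {R : Type*} [CommRing R] (S N D : ℕ) (hS : 1 ≤ S)
    (a : Fin (S - 1) → R) (b : Fin S → R)
    (M : Matrix (Fin S ⊕ Fin (S - 1)) (Fin S ⊕ Fin (S - 1)) R)
    (h_rb : ∀ (i : Fin S) (c : Fin S), M (Sum.inl i) (Sum.inl c) =
      if c = i then
        (if h : (i : ℕ) < S - 1 then -((a ⟨i, h⟩) ^ N * geomSum D (b c))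
         else -(geomSum D (b c)))
      else 0)
    (h_ra : ∀ (i : Fin S) (c : Fin (S - 1)), M (Sum.inl i) (Sum.inr c) =
      if (c : ℕ) = (i : ℕ) then -(geomSum N (a c)) else 0)
    (h_sb : ∀ (s : Fin (S - 1)) (c : Fin S), M (Sum.inr s) (Sum.inl c) =
      if (c : ℕ) = (s : ℕ) then a s - 1 else 0)
    (h_sa : ∀ (s : Fin (S - 1)) (c : Fin (S - 1)), M (Sum.inr s) (Sum.inr c) =
      if c = s then 1 - b (Fin.castLE (Nat.sub_le S 1) s) else 0) :
    M.det = (-1) ^ S * geomSum D (b ⟨S - 1, Nat.sub_lt hS Nat.one_pos⟩) *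
      ∏ i : Fin (S - 1), (1 - (a i) ^ N * (b (Fin.castLE (Nat.sub_le S 1) i)) ^ D) := by
  obtain ⟨T, rfl⟩ : ∃ T, S = T + 1 := ⟨S - 1, (Nat.succ_pred_eq_of_pos hS).symm⟩
  set cst : Fin T → Fin (T + 1) := Fin.castLE (Nat.sub_le (T + 1) 1) with hcst
  set p : Fin T → R := fun k => -(a k ^ N * geomSum D (b (cst k))) with hp
  set q : Fin T → R := fun k => -(geomSum N (a k)) with hq
  set r : Fin T → R := fun k => a k - 1 with hr
  set s : Fin T → R := fun k => 1 - b (cst k) with hs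
  set w : R := -(geomSum D (b (Fin.last T))) with hw
  have h1 : ∀ i c, M (Sum.inl i) (Sum.inl c) =
      if c = i then (if h : (i : ℕ) < T then p ⟨i, h⟩ else w) else 0 := by
    intro i c
    rw [h_rb]
    rcases eq_or_ne c i with h | h
    · subst h
      rw [if_pos rfl, if_pos rfl]
      by_cases hc : (c : ℕ) < T + 1 - 1
      · rw [dif_pos hc, dif_pos (show (c : ℕ) < T from hc)]
        simp only [hp]
        have hcc : cst ⟨(c : ℕ), show (c : ℕ) < T from hc⟩ = c := Fin.ext rfl
        rw [hcc]
      · rw [dif_neg hc, dif_neg (show ¬(c : ℕ) < T from hc), hw]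
        have hcc : c = Fin.last T := Fin.ext (by
          have := c.isLt
          simp only [Fin.val_last]
          omega)
        rw [hcc]
    · rw [if_neg h, if_neg h]
  have h4 : ∀ (j c : Fin T), M (Sum.inr j) (Sum.inr c) = if c = j then s j else 0 :=
    fun j c => h_sa j c
  have key := aux_det T p q r s w M h1 h_ra h_sb h4
  have hfac : ∀ k : Fin T, p k * s k - q k * r k =
      -(1 - a k ^ N * (b (cst k)) ^ D) := by
    intro k
    have hb := geom_sum_mul (b (cst k)) D
    have ha := geom_sum_mul (a k) N
    simp only [hp, hq, hr, hs, geomSum]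
    linear_combination (a k ^ N) * hb + ha
  have final : w * ∏ k : Fin T, (p k * s k - q k * r k) =
      (-1) ^ (T + 1) * geomSum D (b (Fin.last T)) *
        ∏ k : Fin T, (1 - a k ^ N * (b (cst k)) ^ D) := by
    rw [Finset.prod_congr rfl fun k _ => hfac k]
    have hprod : ∏ k : Fin T, -(1 - a k ^ N * (b (cst k)) ^ D) =
        (-1) ^ T * ∏ k : Fin T, (1 - a k ^ N * (b (cst k)) ^ D) := by
      calc ∏ k : Fin T, -(1 - a k ^ N * (b (cst k)) ^ D)
          = ∏ k : Fin T, (-1) * (1 - a k ^ N * (b (cst k)) ^ D) :=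
            Finset.prod_congr rfl fun k _ => by ring
        _ = (∏ _k : Fin T, (-1 : R)) * ∏ k : Fin T, (1 - a k ^ N * (b (cst k)) ^ D) :=
            Finset.prod_mul_distrib
        _ = (-1) ^ T * ∏ k : Fin T, (1 - a k ^ N * (b (cst k)) ^ D) := by
            rw [Finset.prod_const, Finset.card_univ, Fintype.card_fin]
    rw [hprod, hw]
    ring
  exact key.trans final
end

section
/- Let R be a commutative ring, S ≥ 2, N, D natural numbers, a : Fin (S−1) → R, b : Fin S → R, a₀ ∈ R and j ∈ Fin (S−1). Define the (2S−1)×(2S−1) matrix M over R with rows indexed by (Fin S) ⊕ (Fin (S−1)) (relator rows r₁,…,r_S, then commutator rows s₁,…,s_{S−1}) and columns indexed by (Fin (S−1)) ⊕ (Fin S), where the column of a_j is replaced by the column of a₀: that column has entry g_N(a₀) in every relator row rᵢ (1 ≤ i ≤ S) and 0 in every commutator row; the remaining entries are: for i ∈ Fin (S−1) with i ≠ j, row rᵢ has −g_N(aᵢ) in column aᵢ; for all i ∈ Fin (S−1), row rᵢ has −aᵢᴺ·g_D(bᵢ) in column bᵢ; row r_S has −g_D(b_S) in column b_S; row s_j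 has a_j − 1 in column b_j; for i ≠ j, row sᵢ has 1 − bᵢ in column aᵢ and aᵢ − 1 in column bᵢ; all other entries are 0. Then det M = ±g_N(a₀)·g_D(b_S)·(1 − a_j)·∏_{i ∈ Fin(S−1), i ≠ j} (1 − aᵢᴺ·bᵢᴰ), i.e. det M equals this product up to sign. (This is the Type II.j minor of the Alexander matrix of the tst link [Φ^μ(n(τ), d(τ), M)] with M even.) -/
lemma det_of_univ_singleton {R ι : Type*} [CommRing R] [DecidableEq ι] [Fintype ι]
    (x : ι) (huniv : (Finset.univ : Finset ι) = {x}) (A : Matrix ι ι R) :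
    A.det = A x x := by
  have hz : ∀ z : ι, z = x := fun z => by
    have h := Finset.mem_univ z
    rw [huniv, Finset.mem_singleton] at h
    exact h
  have hsub : Subsingleton ι := ⟨fun u v => (hz u).trans (hz v).symm⟩
  let e : Fin 1 ≃ ι :=
    { toFun := fun _ => x, invFun := fun _ => 0,
      left_inv := fun i => Subsingleton.elim _ _,
      right_inv := fun z => (hz z).symm }
  rw [← Matrix.det_submatrix_equiv_self e A, Matrix.det_fin_one]
  rfl

lemma det_of_univ_pair {R ι : Type*} [CommRing R] [DecidableEq ι] [Fintype ι]
    (x y : ι) (hxy : x ≠ y) (huniv : (Finset.univ : Finset ι) = {x, y}) (A : Matrix ι ι R) :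
    A.det = A x x * A y y - A x y * A y x := by
  have hz : ∀ z : ι, z = x ∨ z = y := fun z => by
    have h := Finset.mem_univ z
    rw [huniv, Finset.mem_insert, Finset.mem_singleton] at h
    exact h
  let e : Fin 2 ≃ ι :=
    { toFun := ![x, y], invFun := fun z => if z = x then 0 else 1,
      left_inv := by
        intro i
        fin_cases i
        · simp
        · simp [hxy.symm]
      right_inv := by
        intro z
        rcases hz z with rfl | rfl
        · simp
        · simp [hxy.symm] }
  rw [← Matrix.det_submatrix_equiv_self e A, Matrix.det_fin_two]
  rfl

/-- Grading function putting the tst Alexander minor into block-triangular form. -/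
def tstGrade (S : ℕ) (j : ℕ) : Fin S ⊕ Fin (S - 1) → ℕ
  | .inl i => if (i : ℕ) = S - 1 then 0 else if (i : ℕ) = j then S else (i : ℕ) + 1
  | .inr s => if (s : ℕ) = j then S else (s : ℕ) + 1

open Matrix in
/-- Type II.j minor of the Alexander matrix of a tst link with `M` even: the column of
`a_j` is replaced by the column of `a₀`.
Rows: `Sum.inl i` = relator row `r_{i+1}` (`i : Fin S`), `Sum.inr s` = commutator row
`s_{s+1}` (`s : Fin (S-1)`).  Columns: `Sum.inl c` = column of `b_{c+1}` (`c : Fin S`),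
`Sum.inr c` = column of `a_{c+1}` (`c : Fin (S-1)`), with the column `Sum.inr j`
replaced by the `a₀`-column.  The conclusion is stated up to sign. -/
theorem typeII_minor_even {R : Type*} [CommRing R] (S N D : ℕ) (hS : 2 ≤ S)
    (a : Fin (S - 1) → R) (b : Fin S → R) (a₀ : R) (j : Fin (S - 1))
    (M : Matrix (Fin S ⊕ Fin (S - 1)) (Fin S ⊕ Fin (S - 1)) R)
    (h_rb : ∀ (i : Fin S) (c : Fin S), M (Sum.inl i) (Sum.inl c) =
      if c = i then
        (if h : (i : ℕ) < S - 1 then -((a ⟨i, h⟩) ^ N * geomSum D (b c))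
         else -(geomSum D (b c)))
      else 0)
    (h_ra : ∀ (i : Fin S) (c : Fin (S - 1)), M (Sum.inl i) (Sum.inr c) =
      if c = j then geomSum N a₀
      else if (c : ℕ) = (i : ℕ) then -(geomSum N (a c)) else 0)
    (h_sb : ∀ (s : Fin (S - 1)) (c : Fin S), M (Sum.inr s) (Sum.inl c) =
      if (c : ℕ) = (s : ℕ) then a s - 1 else 0)
    (h_sa : ∀ (s : Fin (S - 1)) (c : Fin (S - 1)), M (Sum.inr s) (Sum.inr c) =
      if c = j then 0
      else if c = s then 1 - b (Fin.castLE (Nat.sub_le S 1) s) else 0) :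
    M.det = geomSum N a₀ * geomSum D (b ⟨S - 1, Nat.sub_lt (by omega) Nat.one_pos⟩) *
        (1 - a j) *
        ∏ i ∈ Finset.univ.erase j, (1 - (a i) ^ N * (b (Fin.castLE (Nat.sub_le S 1) i)) ^ D) ∨
    M.det = -(geomSum N a₀ * geomSum D (b ⟨S - 1, Nat.sub_lt (by omega) Nat.one_pos⟩) *
        (1 - a j) *
        ∏ i ∈ Finset.univ.erase j, (1 - (a i) ^ N * (b (Fin.castLE (Nat.sub_le S 1) i)) ^ D)) := by
  have hj := j.isLt
  -- block triangularity
  have hbt : M.BlockTriangular (tstGrade S (j : ℕ)) := by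
    rintro (i | s) (c | c) h
    · rw [h_rb, if_neg]
      rintro rfl
      exact lt_irrefl _ h
    · rw [h_ra]
      have hi := i.isLt
      have hc := c.isLt
      split_ifs with h1 h2
      · exfalso
        subst h1
        simp only [tstGrade] at h
        split_ifs at h <;> omega
      · exfalso
        have h1' : (c : ℕ) ≠ (j : ℕ) := fun hh => h1 (Fin.ext hh)
        simp only [tstGrade] at h
        split_ifs at h <;> omega
      · rfl
    · rw [h_sb, if_neg]
      intro h1
      have hs := s.isLt
      simp only [tstGrade] at h
      split_ifs at h <;> omega
    · rw [h_sa]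
      have hs := s.isLt
      have hc := c.isLt
      split_ifs with h1 h2
      · rfl
      · exfalso
        have h1' : (c : ℕ) ≠ (j : ℕ) := fun hh => h1 (Fin.ext hh)
        have h2' : (c : ℕ) = (s : ℕ) := congrArg Fin.val h2
        simp only [tstGrade] at h
        split_ifs at h <;> omega
      · rfl
  -- the image of the grading
  have himg : Finset.univ.image (tstGrade S (j : ℕ))
      = insert 0 (insert S ((Finset.univ.erase j).image (fun i : Fin (S - 1) => (i : ℕ) + 1))) := by
    ext k
    simp only [Finset.mem_image, Finset.mem_univ, true_and, Finset.mem_insert, Finset.mem_erase]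
    constructor
    · rintro ⟨x, rfl⟩
      rcases x with i | s
      · have hi := i.isLt
        simp only [tstGrade]
        split_ifs with h1 h2
        · exact Or.inl rfl
        · exact Or.inr (Or.inl rfl)
        · exact Or.inr (Or.inr ⟨⟨(i : ℕ), by omega⟩,
            ⟨fun hh => h2 (congrArg Fin.val hh), trivial⟩, rfl⟩)
      · have hs := s.isLt
        simp only [tstGrade]
        split_ifs with h1
        · exact Or.inr (Or.inl rfl)
        · exact Or.inr (Or.inr ⟨s, ⟨fun hh => h1 (congrArg Fin.val hh), trivial⟩, rfl⟩)
    · rintro (rfl | rfl | ⟨i, ⟨hij, -⟩, rfl⟩)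
      · exact ⟨Sum.inl ⟨S - 1, by omega⟩, by simp [tstGrade]⟩
      · exact ⟨Sum.inr j, by simp [tstGrade]⟩
      · refine ⟨Sum.inr i, ?_⟩
        have hij' : (i : ℕ) ≠ (j : ℕ) := fun hh => hij (Fin.ext hh)
        simp [tstGrade, hij']
  have h0 : (0 : ℕ) ∉ insert S ((Finset.univ.erase j).image (fun i : Fin (S - 1) => (i : ℕ) + 1)) := by
    simp only [Finset.mem_insert, Finset.mem_image, Finset.mem_erase, not_or]
    refine ⟨by omega, ?_⟩
    rintro ⟨i, -, hi⟩
    omega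
  have hS' : S ∉ (Finset.univ.erase j).image (fun i : Fin (S - 1) => (i : ℕ) + 1) := by
    simp only [Finset.mem_image, Finset.mem_erase]
    rintro ⟨i, -, hi⟩
    have := i.isLt
    omega
  have hinj : ∀ x ∈ Finset.univ.erase j, ∀ y ∈ Finset.univ.erase j,
      (x : ℕ) + 1 = (y : ℕ) + 1 → x = y := fun x _ y _ h => Fin.ext (by omega)
  -- the 1×1 block at grade 0
  have hb0 : (M.toSquareBlock (tstGrade S (j : ℕ)) 0).det
      = -(geomSum D (b ⟨S - 1, Nat.sub_lt (by omega) Nat.one_pos⟩)) := by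
    have hx : tstGrade S (j : ℕ) (Sum.inl ⟨S - 1, Nat.sub_lt (by omega) Nat.one_pos⟩) = 0 := by
      simp [tstGrade]
    rw [det_of_univ_singleton ⟨_, hx⟩ ?_ _]
    · show M _ _ = _
      rw [h_rb, if_pos rfl, dif_neg (by simp)]
    · ext z
      obtain ⟨z, hz⟩ := z
      simp only [Finset.mem_univ, Finset.mem_singleton, true_iff]
      apply Subtype.ext
      rcases z with i | s
      · have hi := i.isLt
        simp only [tstGrade] at hz
        split_ifs at hz with h1
        · exact congrArg Sum.inl (Fin.ext h1)
        · exact absurd hz (by omega)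
      · simp only [tstGrade] at hz
        split_ifs at hz <;> exact absurd hz (by omega)
  -- the 2×2 block at grade S
  have hbS : (M.toSquareBlock (tstGrade S (j : ℕ)) S).det = -(geomSum N a₀ * (a j - 1)) := by
    have hx : tstGrade S (j : ℕ) (Sum.inl (Fin.castLE (Nat.sub_le S 1) j)) = S := by
      have hne : (j : ℕ) ≠ S - 1 := by omega
      simp [tstGrade, hne]
    have hy : tstGrade S (j : ℕ) (Sum.inr j) = S := by simp [tstGrade]
    have e1 : M (Sum.inl (Fin.castLE (Nat.sub_le S 1) j)) (Sum.inl (Fin.castLE (Nat.sub_le S 1) j))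
        = -((a j) ^ N * geomSum D (b (Fin.castLE (Nat.sub_le S 1) j))) := by
      rw [h_rb, if_pos rfl, dif_pos (show ((Fin.castLE (Nat.sub_le S 1) j : Fin S) : ℕ) < S - 1 from j.isLt)]
      rfl
    have e2 : M (Sum.inr j) (Sum.inr j) = 0 := by rw [h_sa, if_pos rfl]
    have e3 : M (Sum.inl (Fin.castLE (Nat.sub_le S 1) j)) (Sum.inr j) = geomSum N a₀ := by
      rw [h_ra, if_pos rfl]
    have e4 : M (Sum.inr j) (Sum.inl (Fin.castLE (Nat.sub_le S 1) j)) = a j - 1 := by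
      rw [h_sb, if_pos (show ((Fin.castLE (Nat.sub_le S 1) j : Fin S) : ℕ) = (j : ℕ) from rfl)]
    rw [det_of_univ_pair ⟨_, hx⟩ ⟨_, hy⟩ (by simp) ?_ _]
    · show M _ _ * M _ _ - M _ _ * M _ _ = _
      rw [e1, e2, e3, e4]
      ring
    · ext z
      obtain ⟨z, hz⟩ := z
      simp only [Finset.mem_univ, Finset.mem_insert, Finset.mem_singleton, true_iff]
      rcases z with i | s
      · left
        apply Subtype.ext
        have hi := i.isLt
        simp only [tstGrade] at hz
        split_ifs at hz with h1 h2
        · exact absurd hz (by omega)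
        · exact congrArg Sum.inl (Fin.ext h2)
        · exact absurd hz (by omega)
      · right
        apply Subtype.ext
        have hs := s.isLt
        simp only [tstGrade] at hz
        split_ifs at hz with h1
        · exact congrArg Sum.inr (Fin.ext h1)
        · exact absurd hz (by omega)
  -- the middle 2×2 blocks
  have hbmid : ∀ i ∈ Finset.univ.erase j,
      (M.toSquareBlock (tstGrade S (j : ℕ)) ((i : ℕ) + 1)).det
        = -(1 - (a i) ^ N * (b (Fin.castLE (Nat.sub_le S 1) i)) ^ D) := by
    intro i hi
    rw [Finset.mem_erase] at hi
    have hij : (i : ℕ) ≠ (j : ℕ) := fun hh => hi.1 (Fin.ext hh)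
    have hilt := i.isLt
    have hx : tstGrade S (j : ℕ) (Sum.inl (Fin.castLE (Nat.sub_le S 1) i)) = (i : ℕ) + 1 := by
      simp only [tstGrade, Fin.coe_castLE]
      rw [if_neg (by omega), if_neg hij]
    have hy : tstGrade S (j : ℕ) (Sum.inr i) = (i : ℕ) + 1 := by
      simp only [tstGrade]
      rw [if_neg hij]
    have e1 : M (Sum.inl (Fin.castLE (Nat.sub_le S 1) i)) (Sum.inl (Fin.castLE (Nat.sub_le S 1) i))
        = -((a i) ^ N * geomSum D (b (Fin.castLE (Nat.sub_le S 1) i))) := by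
      rw [h_rb, if_pos rfl, dif_pos (show ((Fin.castLE (Nat.sub_le S 1) i : Fin S) : ℕ) < S - 1 from i.isLt)]
      rfl
    have e2 : M (Sum.inr i) (Sum.inr i) = 1 - b (Fin.castLE (Nat.sub_le S 1) i) := by
      rw [h_sa, if_neg hi.1, if_pos rfl]
    have e3 : M (Sum.inl (Fin.castLE (Nat.sub_le S 1) i)) (Sum.inr i) = -(geomSum N (a i)) := by
      rw [h_ra, if_neg hi.1,
        if_pos (show ((i : Fin (S - 1)) : ℕ) = ((Fin.castLE (Nat.sub_le S 1) i : Fin S) : ℕ) from rfl)]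
    have e4 : M (Sum.inr i) (Sum.inl (Fin.castLE (Nat.sub_le S 1) i)) = a i - 1 := by
      rw [h_sb, if_pos (show ((Fin.castLE (Nat.sub_le S 1) i : Fin S) : ℕ) = (i : ℕ) from rfl)]
    rw [det_of_univ_pair ⟨_, hx⟩ ⟨_, hy⟩ (by simp) ?_ _]
    · show M _ _ * M _ _ - M _ _ * M _ _ = _
      rw [e1, e2, e3, e4]
      have g1 : geomSum D (b (Fin.castLE (Nat.sub_le S 1) i)) * (b (Fin.castLE (Nat.sub_le S 1) i) - 1)
          = (b (Fin.castLE (Nat.sub_le S 1) i)) ^ D - 1 := geom_sum_mul _ _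
      have g2 : geomSum N (a i) * (a i - 1) = (a i) ^ N - 1 := geom_sum_mul _ _
      linear_combination (a i) ^ N * g1 + g2
    · ext z
      obtain ⟨z, hz⟩ := z
      simp only [Finset.mem_univ, Finset.mem_insert, Finset.mem_singleton, true_iff]
      rcases z with m | s
      · left
        apply Subtype.ext
        have hm := m.isLt
        simp only [tstGrade] at hz
        by_cases h1 : (m : ℕ) = S - 1
        · rw [if_pos h1] at hz
          exact absurd hz (by omega)
        · rw [if_neg h1] at hz
          by_cases h2 : (m : ℕ) = (j : ℕ)
          · rw [if_pos h2] at hz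
            exact absurd hz (by omega)
          · rw [if_neg h2] at hz
            exact congrArg Sum.inl (Fin.ext (show (m : ℕ) = (i : ℕ) by omega))
      · right
        apply Subtype.ext
        have hs := s.isLt
        simp only [tstGrade] at hz
        split_ifs at hz with h1
        · exact absurd hz (by omega)
        · exact congrArg Sum.inr (Fin.ext (show (s : ℕ) = (i : ℕ) by omega))
  -- assemble
  rw [hbt.det, himg, Finset.prod_insert h0, Finset.prod_insert hS',
    Finset.prod_image hinj, hb0, hbS, Finset.prod_congr rfl hbmid]
  have hprodneg : (∏ i ∈ Finset.univ.erase j,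
        -(1 - (a i) ^ N * (b (Fin.castLE (Nat.sub_le S 1) i)) ^ D))
      = (-1 : R) ^ (Finset.univ.erase j).card *
        ∏ i ∈ Finset.univ.erase j, (1 - (a i) ^ N * (b (Fin.castLE (Nat.sub_le S 1) i)) ^ D) := by
    rw [← Finset.prod_const, ← Finset.prod_mul_distrib]
    simp
  rw [hprodneg]
  rcases Nat.even_or_odd (Finset.univ.erase j).card with he | ho
  · right
    rw [he.neg_one_pow]
    ring
  · left
    rw [ho.neg_one_pow]
    ring
end

section
/- Let S ≥ 1 and let N, D ≥ 1 be coprime natural numbers. Then in ℤ[X] the product (1 − X^{SN})·(1 − X^{SD}) divides (1 − X)·(1 − X^{SND})^S. (Equivalently, the Alexander polynomial expression (1−t)(1−t^{SND})^S/((1−t^{SN})(1−t^{SD})) of the (−SN, SD)-torus link is a polynomial.) -/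
/-!
Put `x = X ^ S`. Any common divisor of `x ^ N - 1` and `x ^ D - 1` divides `x ^ gcd N D - 1`
(Euclid's algorithm on the exponents), so `gcd (x^N - 1) (x^D - 1) ∣ x - 1`, while both factors
divide `x ^ (N * D) - 1`, hence so does their lcm; as `ℤ[X]` is a GCD domain this gives
`(x^N - 1)(x^D - 1) ∣ (x - 1)(x^(ND) - 1)`. Finally `X ^ S - 1 ∣ (X - 1) (X^(SND) - 1)^(S - 1)`
(for `S ≥ 2` already `X ^ S - 1 ∣ X^(SND) - 1`), and the signs of the factors `1 - ·` cancel up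
to a unit.
-/

section CommRing

variable {R : Type*} [CommRing R]

theorem dvd_pow_mod_sub_one {g x : R} {m n : ℕ} (hm : g ∣ x ^ m - 1) (hn : g ∣ x ^ n - 1) :
    g ∣ x ^ (n % m) - 1 := by
  have hsplit : x ^ n - 1 = x ^ (n % m) * (x ^ (m * (n / m)) - 1) + (x ^ (n % m) - 1) := by
    rw [mul_sub, ← pow_add, Nat.mod_add_div]
    ring
  rw [hsplit] at hn
  exact (dvd_add_right ((hm.trans (pow_one_sub_dvd_pow_mul_sub_one x m _)).mul_left _)).mp hn

theorem dvd_pow_gcd_sub_one {g x : R} {m n : ℕ} (hm : g ∣ x ^ m - 1) (hn : g ∣ x ^ n - 1) :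
    g ∣ x ^ Nat.gcd m n - 1 := by
  induction m, n using Nat.gcd.induction with
  | H0 n => simpa using hn
  | H1 m n _ ih =>
    rw [Nat.gcd_rec]
    exact ih (dvd_pow_mod_sub_one hm hn) hm

theorem pow_sub_one_dvd_sub_one_mul_pow {S : ℕ} (hS : 1 ≤ S) (x : R) (k : ℕ) :
    x ^ S - 1 ∣ (x - 1) * (x ^ (S * k) - 1) ^ (S - 1) := by
  obtain rfl | hS2 := hS.eq_or_lt
  · simp
  · exact ((pow_one_sub_dvd_pow_mul_sub_one x S k).trans
      (dvd_pow_self _ (by omega))).mul_left _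

theorem pow_sub_one_mul_dvd_sub_one_mul_pow {S : ℕ} (hS : 1 ≤ S) (x : R) (k : ℕ) :
    (x ^ S - 1) * (x ^ (S * k) - 1) ∣ (x - 1) * (x ^ (S * k) - 1) ^ S := by
  calc (x ^ S - 1) * (x ^ (S * k) - 1)
      ∣ (x - 1) * (x ^ (S * k) - 1) ^ (S - 1) * (x ^ (S * k) - 1) :=
        mul_dvd_mul_right (pow_sub_one_dvd_sub_one_mul_pow hS x k) _
    _ = (x - 1) * (x ^ (S * k) - 1) ^ S := by
        rw [mul_assoc, ← pow_succ, Nat.sub_add_cancel hS]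

end CommRing

theorem pow_sub_one_mul_pow_sub_one_dvd {R : Type*} [CommRing R] [GCDMonoid R]
    (x : R) {N D : ℕ} (hND : N.Coprime D) :
    (x ^ N - 1) * (x ^ D - 1) ∣ (x - 1) * (x ^ (N * D) - 1) := by
  have hgcd : gcd (x ^ N - 1) (x ^ D - 1) ∣ x - 1 := by
    simpa [hND.gcd_eq_one] using
      dvd_pow_gcd_sub_one (gcd_dvd_left (x ^ N - 1) (x ^ D - 1)) (gcd_dvd_right _ _)
  have hlcm : lcm (x ^ N - 1) (x ^ D - 1) ∣ x ^ (N * D) - 1 :=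
    lcm_dvd (dvd_pow_sub_one_of_dvd (dvd_mul_right N D))
      (dvd_pow_sub_one_of_dvd (dvd_mul_left D N))
  exact (gcd_mul_lcm _ _).symm.dvd.trans (mul_dvd_mul hgcd hlcm)

open Polynomial in
theorem alexander_poly_is_polynomial_general (S N D : ℕ) (hS : 1 ≤ S)
    (hND : Nat.Coprime N D) :
    ((1 - (X : ℤ[X]) ^ (S * N)) * (1 - (X : ℤ[X]) ^ (S * D))) ∣
      ((1 - (X : ℤ[X])) * (1 - (X : ℤ[X]) ^ (S * N * D)) ^ S) := by
  have hsub : ((X : ℤ[X]) ^ (S * N) - 1) * (X ^ (S * D) - 1) ∣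
      (X ^ S - 1) * (X ^ (S * (N * D)) - 1) := by
    simpa only [pow_mul] using pow_sub_one_mul_pow_sub_one_dvd ((X : ℤ[X]) ^ S) hND
  have hdvd := hsub.trans (pow_sub_one_mul_dvd_sub_one_mul_pow hS (X : ℤ[X]) (N * D))
  rw [← mul_assoc] at hdvd
  rw [← neg_sub _ 1, ← neg_sub _ 1, ← neg_sub _ 1, ← neg_sub _ 1, neg_mul_neg, neg_pow,
    neg_mul, dvd_neg, mul_left_comm]
  exact hdvd.mul_left _

open Polynomial in
theorem alexander_poly_is_polynomial (S N D : ℕ) (hS : 1 ≤ S) (hN : 1 ≤ N) (hD : 1 ≤ D)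
    (hND : Nat.Coprime N D) :
    ((1 - (X : ℤ[X]) ^ (S * N)) * (1 - (X : ℤ[X]) ^ (S * D))) ∣
      ((1 - (X : ℤ[X])) * (1 - (X : ℤ[X]) ^ (S * N * D)) ^ S) :=
  alexander_poly_is_polynomial_general S N D hS hND
end
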